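/- Under the same hypotheses, with $X^{(0)} \equiv 1$, $X^{(n)}(x) = n\int_0^x X^{(n-1)} (p g_0^2)^{-1}$ for odd $n$ and $X^{(n)}(x) = n\int_0^x X^{(n-1)} g_0^2$ for even $n$, the function $u_2 = g_0 \sum_{\text{odd } n \geq 1} \frac{\omega^n}{n!} X^{(n)}$ solves $(p u_2')' + q u_2 = \omega^2 u_2$ on $I$. -/

import Mathlib

open scoped Nat

/-- The SPPS recursive integrals: `spps wodd weven 0 ≡ 1` and
`spps wodd weven n x = n ∫₀ˣ spps wodd weven (n-1) · w`, where the weight `w`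
is `wodd` when `n` is odd and `weven` when `n` is even. -/
noncomputable def spps (wodd weven : ℝ → ℂ) : ℕ → ℝ → ℂ
  | 0 => fun _ => 1
  | n + 1 => fun x => (n + 1 : ℂ) *
      ∫ t in (0:ℝ)..x,
        spps wodd weven n t * (if (n + 1) % 2 = 1 then wodd t else weven t)

/-!
Let `F = ∑_{n odd} ωⁿ/n! X⁽ⁿ⁾` and `E = ∑_{n even} ωⁿ/n! X⁽ⁿ⁾`, so that `u₂ = g₀ F`. Induction gives
`‖X⁽ⁿ⁾(x)‖ ≤ (C|x|)ⁿ` when both weights are bounded by `C`, so both series are dominated by the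
exponential series and may be differentiated termwise; the recursion then becomes the first-order
system `F' = ω E / (p g₀²)`, `E' = ω g₀² F`. Hence `p u₂' = p g₀' F + ω E / g₀`, and differentiating
once more, `(p g₀')' = -q g₀` turns this into `(p u₂')' + q u₂ = ω² u₂`.
-/

open Set Topology intervalIntegral MeasureTheory Interval

lemma abs_integral_abs_pow (n : ℕ) (x : ℝ) :
    |∫ t in (0:ℝ)..x, |t| ^ n| = |x| ^ (n + 1) / (n + 1) := by
  wlog hx : 0 ≤ x generalizing x
  · have h_neg : ∫ t in (0:ℝ)..x, |t| ^ n = -∫ t in (0:ℝ)..(-x), |t| ^ n := by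
      rw [← integral_symm]
      simpa using integral_comp_neg (a := 0) (b := x) fun t => |t| ^ n
    rw [h_neg, abs_neg, this (-x) (by linarith), abs_neg]
  rw [integral_congr fun t ht => by rw [abs_of_nonneg (uIcc_of_le hx ▸ ht).1], integral_pow]
  simp [abs_div, abs_of_nonneg hx, abs_of_nonneg (by positivity : (0:ℝ) ≤ n + 1)]

lemma hasDerivAt_integral_of_continuousOn {E : Type*} [NormedAddCommGroup E] [NormedSpace ℝ E]
    [CompleteSpace E] {U : Set ℝ} (hU : IsOpen U) [U.OrdConnected] {f : ℝ → E}
    (hf : ContinuousOn f U) {a y : ℝ} (ha : a ∈ U) (hy : y ∈ U) :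
    HasDerivAt (fun x => ∫ t in a..x, f t) (f y) y :=
  integral_hasDerivAt_right ((hf.mono (OrdConnected.uIcc_subset ‹_› ha hy)).intervalIntegrable)
    (hf.stronglyMeasurableAtFilter hU y hy) (hf.continuousAt (hU.mem_nhds hy))

lemma ContinuousOn.if_const {α β : Type*} [TopologicalSpace α] [TopologicalSpace β]
    {f g : α → β} {s : Set α} (P : Prop) [Decidable P] (hf : ContinuousOn f s)
    (hg : ContinuousOn g s) : ContinuousOn (fun a => if P then f a else g a) s := by
  split_ifs <;> assumption

section spps

variable {U : Set ℝ} [U.OrdConnected] {w₁ w₂ : ℝ → ℂ}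

lemma continuousOn_spps (hU : IsOpen U) (h0 : 0 ∈ U) (hw₁ : ContinuousOn w₁ U)
    (hw₂ : ContinuousOn w₂ U) : ∀ n, ContinuousOn (spps w₁ w₂ n) U
  | 0 => continuousOn_const
  | n + 1 => fun _ hy =>
    ((hasDerivAt_integral_of_continuousOn hU ((continuousOn_spps hU h0 hw₁ hw₂ n).mul
      (hw₁.if_const _ hw₂)) h0 hy).continuousAt.const_mul _).continuousWithinAt

lemma hasDerivAt_spps_succ (hU : IsOpen U) (h0 : 0 ∈ U) (hw₁ : ContinuousOn w₁ U)
    (hw₂ : ContinuousOn w₂ U) (n : ℕ) {y : ℝ} (hy : y ∈ U) :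
    HasDerivAt (spps w₁ w₂ (n + 1))
      ((n + 1) * (spps w₁ w₂ n y * if (n + 1) % 2 = 1 then w₁ y else w₂ y)) y :=
  (hasDerivAt_integral_of_continuousOn hU ((continuousOn_spps hU h0 hw₁ hw₂ n).mul
    (hw₁.if_const _ hw₂)) h0 hy).const_mul _

lemma norm_spps_le (h0 : 0 ∈ U) {C : ℝ} (hC₁ : ∀ x ∈ U, ‖w₁ x‖ ≤ C)
    (hC₂ : ∀ x ∈ U, ‖w₂ x‖ ≤ C) : ∀ n, ∀ x ∈ U, ‖spps w₁ w₂ n x‖ ≤ (C * |x|) ^ n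
  | 0, _, _ => by simp [spps]
  | n + 1, x, hx => by
    have hC : 0 ≤ C := (norm_nonneg _).trans (hC₁ 0 h0)
    have hbound : ∀ᵐ t ∂volume.restrict (Ι 0 x),
        ‖spps w₁ w₂ n t * (if (n + 1) % 2 = 1 then w₁ t else w₂ t)‖ ≤ C ^ (n + 1) * |t| ^ n := by
      refine ae_restrict_of_forall_mem measurableSet_uIoc fun t ht => ?_
      have htU : t ∈ U := OrdConnected.uIcc_subset ‹_› h0 hx (uIoc_subset_uIcc ht)
      calc _ ≤ (C * |t|) ^ n * C := norm_mul_le_of_le (norm_spps_le h0 hC₁ hC₂ n t htU)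
              (by split_ifs; exacts [hC₁ t htU, hC₂ t htU])
        _ = C ^ (n + 1) * |t| ^ n := by ring
    have hint := norm_integral_le_abs_of_norm_le hbound
      ((continuous_const.mul (continuous_abs.pow n)).intervalIntegrable 0 x)
    rw [intervalIntegral.integral_const_mul, abs_mul, abs_integral_abs_pow,
      abs_of_nonneg (pow_nonneg hC _)] at hint
    calc ‖spps w₁ w₂ (n + 1) x‖
        = (n + 1) * ‖∫ t in (0:ℝ)..x,
            spps w₁ w₂ n t * (if (n + 1) % 2 = 1 then w₁ t else w₂ t)‖ := by
          rw [spps, norm_mul]; norm_cast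
      _ ≤ (n + 1) * (C ^ (n + 1) * (|x| ^ (n + 1) / (n + 1))) := by gcongr
      _ = (C * |x|) ^ (n + 1) := by field_simp; ring

end spps

lemma summable_comp_of_norm_le_pow_div_factorial {E : Type*} [NormedAddCommGroup E]
    [CompleteSpace E] {Y : ℕ → E} {σ : ℕ → ℕ} (hσ : σ.Injective) {r : ℝ}
    (hY : ∀ n, ‖Y n‖ ≤ r ^ n / n !) : Summable fun k => Y (σ k) :=
  ((Real.summable_pow_div_factorial r).comp_injective hσ).of_norm_bounded fun k => hY (σ k)

theorem hasDerivAt_tsum_comp_succ {U : Set ℝ} (hU : IsOpen U) (hU' : IsPreconnected U)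
    {Y : ℕ → ℝ → ℂ} {v : ℝ → ℂ} {σ : ℕ → ℕ} (hσ : σ.Injective) {r C : ℝ}
    (hY : ∀ n, ∀ y ∈ U, ‖Y n y‖ ≤ r ^ n / n !) (hv : ∀ y ∈ U, ‖v y‖ ≤ C)
    (hd : ∀ k, ∀ y ∈ U, HasDerivAt (Y (σ k + 1)) (v y * Y (σ k) y) y) {y : ℝ} (hy : y ∈ U) :
    HasDerivAt (fun z => ∑' k, Y (σ k + 1) z) (v y * ∑' k, Y (σ k) y) y := by
  rw [← tsum_mul_left]
  exact hasDerivAt_tsum_of_isPreconnected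
    (((Real.summable_pow_div_factorial r).comp_injective hσ).mul_left C) hU hU' hd
    (fun k z hz => norm_mul_le_of_le (hv z hz) (hY _ z hz)) hy
    (summable_comp_of_norm_le_pow_div_factorial ((add_left_injective 1).comp hσ)
      fun n => hY n y hy) hy

noncomputable def sppsTerm (ω : ℂ) (w₁ w₂ : ℝ → ℂ) (n : ℕ) (x : ℝ) : ℂ :=
  ω ^ n / n ! * spps w₁ w₂ n x

section sppsTerm

variable {U : Set ℝ} [U.OrdConnected] {w₁ w₂ : ℝ → ℂ} {ω : ℂ}

lemma norm_sppsTerm_le (h0 : 0 ∈ U) {C : ℝ} (hC₁ : ∀ x ∈ U, ‖w₁ x‖ ≤ C)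
    (hC₂ : ∀ x ∈ U, ‖w₂ x‖ ≤ C) (n : ℕ) {x : ℝ} (hx : x ∈ U) :
    ‖sppsTerm ω w₁ w₂ n x‖ ≤ (‖ω‖ * C * |x|) ^ n / n ! := by
  rw [sppsTerm, norm_mul, norm_div, norm_pow, Complex.norm_natCast, mul_assoc, mul_pow,
    div_mul_eq_mul_div]
  gcongr
  exact norm_spps_le h0 hC₁ hC₂ n x hx

lemma hasDerivAt_sppsTerm_succ (hU : IsOpen U) (h0 : 0 ∈ U) (hw₁ : ContinuousOn w₁ U)
    (hw₂ : ContinuousOn w₂ U) (n : ℕ) {y : ℝ} (hy : y ∈ U) :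
    HasDerivAt (sppsTerm ω w₁ w₂ (n + 1))
      (ω * (if (n + 1) % 2 = 1 then w₁ y else w₂ y) * sppsTerm ω w₁ w₂ n y) y := by
  refine ((hasDerivAt_spps_succ hU h0 hw₁ hw₂ n hy).const_mul
    (ω ^ (n + 1) / (n + 1)! : ℂ)).congr_deriv ?_
  rw [sppsTerm, Nat.factorial_succ]
  push_cast
  field_simp
  ring

lemma hasDerivAt_tsum_sppsTerm (hU : IsOpen U) (hUb : Bornology.IsBounded U) (h0 : 0 ∈ U)
    (hw₁ : ContinuousOn w₁ U) (hw₂ : ContinuousOn w₂ U) {C : ℝ} (hC₁ : ∀ x ∈ U, ‖w₁ x‖ ≤ C)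
    (hC₂ : ∀ x ∈ U, ‖w₂ x‖ ≤ C) {y : ℝ} (hy : y ∈ U) :
    HasDerivAt (fun z => ∑' k, sppsTerm ω w₁ w₂ (2 * k + 1) z)
        (ω * w₁ y * ∑' k, sppsTerm ω w₁ w₂ (2 * k) y) y ∧
      HasDerivAt (fun z => ∑' k, sppsTerm ω w₁ w₂ (2 * k) z)
        (ω * w₂ y * ∑' k, sppsTerm ω w₁ w₂ (2 * k + 1) y) y := by
  obtain ⟨L, hL⟩ := isBounded_iff_forall_norm_le.mp hUb
  have hC : 0 ≤ C := (norm_nonneg _).trans (hC₁ 0 h0)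
  have hY (n : ℕ) (x : ℝ) (hx : x ∈ U) :
      ‖sppsTerm ω w₁ w₂ n x‖ ≤ (‖ω‖ * C * L) ^ n / n ! :=
    (norm_sppsTerm_le h0 hC₁ hC₂ n hx).trans (by gcongr; exact hL x hx)
  have hU' : IsPreconnected U := OrdConnected.isPreconnected ‹_›
  have hv {w : ℝ → ℂ} (hw : ∀ x ∈ U, ‖w x‖ ≤ C) (x : ℝ) (hx : x ∈ U) : ‖ω * w x‖ ≤ ‖ω‖ * C :=
    norm_mul_le_of_le le_rfl (hw x hx)
  have h_even : (fun k : ℕ => 2 * k).Injective := fun _ _ h => by simp only at h; omega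
  have h_odd : (fun k : ℕ => 2 * k + 1).Injective := fun _ _ h => by simp only at h; omega
  have hF := hasDerivAt_tsum_comp_succ hU hU' h_even hY (hv hC₁) (fun k z hz => by
    simpa only [if_pos (by omega : (2 * k + 1) % 2 = 1)] using
      hasDerivAt_sppsTerm_succ (ω := ω) hU h0 hw₁ hw₂ (2 * k) hz) hy
  have hE := hasDerivAt_tsum_comp_succ hU hU' h_odd hY (hv hC₂) (fun k z hz => by
    simpa only [if_neg (by omega : ¬(2 * k + 1 + 1) % 2 = 1)] using
      hasDerivAt_sppsTerm_succ (ω := ω) hU h0 hw₁ hw₂ (2 * k + 1) hz) hy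
  refine ⟨hF, (hE.const_add 1).congr_of_eventuallyEq ?_⟩
  -- `X⁽⁰⁾ ≡ 1` is the one even term that is not the derivative of an odd one.
  filter_upwards [hU.mem_nhds hy] with z hz
  rw [(summable_comp_of_norm_le_pow_div_factorial h_even fun n => hY n z hz).tsum_eq_zero_add]
  simp [sppsTerm, spps, mul_add]

end sppsTerm

lemma sturmLiouville_mul_of_hasDerivAt {U : Set ℝ} (hU : IsOpen U) {p q g F E : ℝ → ℂ} {ω : ℂ}
    {x : ℝ} (hx : x ∈ U) (hp : ∀ y ∈ U, p y ≠ 0) (hg0 : ∀ y ∈ U, g y ≠ 0)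
    (hg : ∀ y ∈ U, DifferentiableAt ℝ g y)
    (hpg : DifferentiableAt ℝ (fun y => p y * deriv g y) x)
    (heq : deriv (fun y => p y * deriv g y) x + q x * g x = 0)
    (hF : ∀ y ∈ U, HasDerivAt F (ω * (p y * g y ^ 2)⁻¹ * E y) y)
    (hE : HasDerivAt E (ω * g x ^ 2 * F x) x) :
    deriv (fun y => p y * deriv (fun s => g s * F s) y) x + q x * (g x * F x) =
      ω ^ 2 * (g x * F x) := by
  have hpu : (fun y => p y * deriv (fun s => g s * F s) y) =ᶠ[𝓝 x]
      fun y => p y * deriv g y * F y + ω * E y / g y := by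
    filter_upwards [hU.mem_nhds hx] with y hy
    have hu : HasDerivAt (fun s => g s * F s) _ y := (hg y hy).hasDerivAt.mul (hF y hy)
    rw [hu.deriv]
    field_simp [hp y hy, hg0 y hy]
  have hd : HasDerivAt (fun y => p y * deriv g y * F y + ω * E y / g y) _ x :=
    (hpg.hasDerivAt.mul (hF x hx)).add ((hE.const_mul ω).div (hg x hx).hasDerivAt (hg0 x hx))
  rw [hpu.deriv_eq, hd.deriv]
  field_simp [hp x hx, hg0 x hx]
  linear_combination F x * g x ^ 2 * heq

theorem spps_u2_sturm_liouville_general (a b : ℝ) (ha : a < 0) (hb : 0 < b) (ω : ℂ)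
    (p q g0 : ℝ → ℂ)
    (hp : ContDiffOn ℝ 1 p (Set.Ioo a b))
    (hp0 : ∀ x ∈ Set.Ioo a b, p x ≠ 0)
    (hg : ContDiffOn ℝ 2 g0 (Set.Ioo a b))
    (hg0 : ∀ x ∈ Set.Ioo a b, g0 x ≠ 0)
    (heq : ∀ x ∈ Set.Ioo a b,
      deriv (fun y => p y * deriv g0 y) x + q x * g0 x = 0)
    (hbd : ∃ M : ℝ, ∀ x ∈ Set.Ioo a b,
      ‖g0 x‖ ≤ M ∧ ‖(g0 x)⁻¹‖ ≤ M ∧ ‖p x‖ ≤ M ∧ ‖(p x)⁻¹‖ ≤ M) :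
    ∀ x ∈ Set.Ioo a b,
      deriv (fun y => p y * deriv (fun s => g0 s * ∑' k : ℕ,
          ω ^ (2 * k + 1) / ((2 * k + 1)! : ℂ) *
            spps (fun t => (p t * g0 t ^ 2)⁻¹) (fun t => g0 t ^ 2) (2 * k + 1) s) y) x +
        q x * (g0 x * ∑' k : ℕ,
          ω ^ (2 * k + 1) / ((2 * k + 1)! : ℂ) *
            spps (fun t => (p t * g0 t ^ 2)⁻¹) (fun t => g0 t ^ 2) (2 * k + 1) x) =
      ω ^ 2 * (g0 x * ∑' k : ℕ,
          ω ^ (2 * k + 1) / ((2 * k + 1)! : ℂ) *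
            spps (fun t => (p t * g0 t ^ 2)⁻¹) (fun t => g0 t ^ 2) (2 * k + 1) x) := by
  intro x hx
  obtain ⟨M, hM⟩ := hbd
  have hw₁ : ContinuousOn (fun t => (p t * g0 t ^ 2)⁻¹) (Ioo a b) :=
    (hp.continuousOn.mul (hg.continuousOn.pow 2)).inv₀ fun t ht =>
      mul_ne_zero (hp0 t ht) (pow_ne_zero 2 (hg0 t ht))
  have hM₁ (t : ℝ) (ht : t ∈ Ioo a b) : ‖(p t * g0 t ^ 2)⁻¹‖ ≤ max (M ^ 3) (M ^ 2) := by
    obtain ⟨-, hg', -, hp'⟩ := hM t ht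
    rw [mul_inv, norm_mul, ← inv_pow, norm_pow]
    exact le_max_of_le_left ((mul_le_mul hp' (pow_le_pow_left₀ (norm_nonneg _) hg' 2)
      (by positivity) ((norm_nonneg _).trans hp')).trans_eq (by ring))
  have hM₂ (t : ℝ) (ht : t ∈ Ioo a b) : ‖g0 t ^ 2‖ ≤ max (M ^ 3) (M ^ 2) :=
    le_max_of_le_right (norm_pow (g0 t) 2 ▸ pow_le_pow_left₀ (norm_nonneg _) (hM t ht).1 2)
  have hseries (y : ℝ) (hy : y ∈ Ioo a b) := hasDerivAt_tsum_sppsTerm (ω := ω) isOpen_Ioo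
    (Metric.isBounded_Ioo a b) ⟨ha, hb⟩ hw₁ (hg.continuousOn.pow 2) hM₁ hM₂ hy
  have hg_diff (y : ℝ) (hy : y ∈ Ioo a b) : DifferentiableAt ℝ g0 y :=
    (hg.differentiableOn two_ne_zero).differentiableAt (isOpen_Ioo.mem_nhds hy)
  have hpg_diff : DifferentiableAt ℝ (fun y => p y * deriv g0 y) x :=
    ((hp.mul (hg.deriv_of_isOpen isOpen_Ioo le_rfl)).differentiableOn one_ne_zero).differentiableAt
      (isOpen_Ioo.mem_nhds hx)
  exact sturmLiouville_mul_of_hasDerivAt isOpen_Ioo hx hp0 hg0 hg_diff hpg_diff (heq x hx)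
    (fun y hy => (hseries y hy).1) (hseries x hx).2

/-- `u₂ = g₀ ∑_{odd n} ωⁿ/n! X⁽ⁿ⁾` solves `(p u₂')' + q u₂ = ω² u₂`, where `X⁽ⁿ⁾`
has weight `(p g₀²)⁻¹` for odd `n` and `g₀²` for even `n`. -/
theorem spps_u2_sturm_liouville (a b : ℝ) (ha : a < 0) (hb : 0 < b) (ω : ℂ)
    (p q g0 : ℝ → ℂ)
    (hp : ContDiffOn ℝ 1 p (Set.Ioo a b))
    (hp0 : ∀ x ∈ Set.Ioo a b, p x ≠ 0)
    (hq : ContinuousOn q (Set.Ioo a b))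
    (hg : ContDiffOn ℝ 2 g0 (Set.Ioo a b))
    (hg0 : ∀ x ∈ Set.Ioo a b, g0 x ≠ 0)
    (heq : ∀ x ∈ Set.Ioo a b,
      deriv (fun y => p y * deriv g0 y) x + q x * g0 x = 0)
    (hbd : ∃ M : ℝ, ∀ x ∈ Set.Ioo a b,
      ‖g0 x‖ ≤ M ∧ ‖(g0 x)⁻¹‖ ≤ M ∧ ‖p x‖ ≤ M ∧ ‖(p x)⁻¹‖ ≤ M) :
    ∀ x ∈ Set.Ioo a b,
      deriv (fun y => p y * deriv (fun s => g0 s * ∑' k : ℕ,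
          ω ^ (2 * k + 1) / ((2 * k + 1)! : ℂ) *
            spps (fun t => (p t * g0 t ^ 2)⁻¹) (fun t => g0 t ^ 2) (2 * k + 1) s) y) x +
        q x * (g0 x * ∑' k : ℕ,
          ω ^ (2 * k + 1) / ((2 * k + 1)! : ℂ) *
            spps (fun t => (p t * g0 t ^ 2)⁻¹) (fun t => g0 t ^ 2) (2 * k + 1) x) =
      ω ^ 2 * (g0 x * ∑' k : ℕ,
          ω ^ (2 * k + 1) / ((2 * k + 1)! : ℂ) *
            spps (fun t => (p t * g0 t ^ 2)⁻¹) (fun t => g0 t ^ 2) (2 * k + 1) x) :=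
  spps_u2_sturm_liouville_general a b ha hb ω p q g0 hp hp0 hg hg0 heq hbd
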